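/- arXiv:2502.04667 — 4 statements merged into one kernel-verified Lean document; each statement's English description precedes it below -/
import Mathlib

section
/- Let 𝒴 be a finite set, let P_ID and P_OOD be probability mass functions on 𝒴 with disjoint supports, let α ∈ (0,1), and let P_test = (1−α)·P_ID + α·P_OOD. Let P_train be a probability mass function on 𝒴 that is strictly positive on the supports of P_ID and P_OOD. Then D_KL(P_test‖P_train) = −H(α) + (1−α)·D_KL(P_ID‖P_train) + α·D_KL(P_OOD‖P_train), where H(α) = −α·log α − (1−α)·log(1−α). -/
/-- `P` is a probability mass function on the finite set `𝒴`. -/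
def IsPMF {𝒴 : Type*} [Fintype 𝒴] (P : 𝒴 → ℝ) : Prop :=
  (∀ z, 0 ≤ P z) ∧ ∑ z, P z = 1

/-- KL divergence between probability mass functions on a finite set,
with the convention `0 * log (0 / b) = 0` (automatic in Lean). -/
noncomputable def klDiv {𝒴 : Type*} [Fintype 𝒴] (P Q : 𝒴 → ℝ) : ℝ :=
  ∑ z, P z * Real.log (P z / Q z)

/-- Binary entropy `H(α) = -α log α - (1-α) log (1-α)`. -/
noncomputable def binEntropy (α : ℝ) : ℝ :=
  -α * Real.log α - (1 - α) * Real.log (1 - α)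

/-- KL divergence decomposition for a mixture test distribution with disjoint
ID/OOD supports. -/
theorem kl_decomposition {𝒴 : Type*} [Fintype 𝒴]
    (P_ID P_OOD P_train : 𝒴 → ℝ)
    (hID : IsPMF P_ID) (hOOD : IsPMF P_OOD) (htrain : IsPMF P_train)
    (hdisj : ∀ z, P_ID z = 0 ∨ P_OOD z = 0)
    (α : ℝ) (hα0 : 0 < α) (hα1 : α < 1)
    (hposID : ∀ z, 0 < P_ID z → 0 < P_train z)
    (hposOOD : ∀ z, 0 < P_OOD z → 0 < P_train z) :
    klDiv (fun z => (1 - α) * P_ID z + α * P_OOD z) P_train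
      = -binEntropy α + (1 - α) * klDiv P_ID P_train + α * klDiv P_OOD P_train := by
  have h1α : (0:ℝ) < 1 - α := by linarith
  have key : ∀ z, ((1 - α) * P_ID z + α * P_OOD z) *
      Real.log (((1 - α) * P_ID z + α * P_OOD z) / P_train z)
      = (1 - α) * (P_ID z * (Real.log (P_ID z / P_train z) + Real.log (1 - α)))
        + α * (P_OOD z * (Real.log (P_OOD z / P_train z) + Real.log α)) := by
    intro z
    rcases hdisj z with h | h
    · rcases ((hOOD.1 z).lt_or_eq) with hp | hp
      · have hQ := hposOOD z hp
        have : α * P_OOD z / P_train z = α * (P_OOD z / P_train z) := by ring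
        rw [h]; simp only [mul_zero, zero_add, add_zero]
        rw [this, Real.log_mul (ne_of_gt hα0)
          (ne_of_gt (div_pos hp hQ))]
        ring
      · rw [h, ← hp]; simp
    · rcases ((hID.1 z).lt_or_eq) with hp | hp
      · have hQ := hposID z hp
        have : (1 - α) * P_ID z / P_train z = (1 - α) * (P_ID z / P_train z) := by ring
        rw [h]; simp only [mul_zero, zero_add, add_zero]
        rw [this, Real.log_mul (ne_of_gt h1α)
          (ne_of_gt (div_pos hp hQ))]
        ring
      · rw [h, ← hp]; simp
  simp only [klDiv, binEntropy]
  rw [Finset.sum_congr rfl (fun z _ => key z)]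
  simp only [mul_add, Finset.sum_add_distrib, ← Finset.mul_sum, ← Finset.sum_mul]
  rw [hID.2, hOOD.2]
  ring
end

section
/- Let 𝒴 be a finite set, let P_ID and P_OOD be probability mass functions on 𝒴 with disjoint supports, let α ∈ [0,1], and let P_test = (1−α)·P_ID + α·P_OOD. Let P_train be a probability mass function on 𝒴 that is strictly positive on the supports of P_ID and P_OOD. Let N be a positive integer and let g : 𝒴 → ℝ be a function that is (R/√N)-subGaussian under P_train. Then the expected generalization error E_{P_test}[g] − E_{P_train}[g] satisfies E_{P_test}[g] − E_{P_train}[g] ≤ √( (2R²/N) · [ (1−α)·D_KL(P_ID‖P_train) + α·D_KL(P_OOD‖P_train) ] ). -/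
/-- `g` is `R`-subGaussian under the probability mass function `P`:
`E_P[exp (t (g - E_P[g]))] ≤ exp (t² R² / 2)` for all `t`. -/
def IsSubGaussianPMF {𝒴 : Type*} [Fintype 𝒴] (P : 𝒴 → ℝ) (g : 𝒴 → ℝ) (R : ℝ) : Prop :=
  ∀ t : ℝ, ∑ z, P z * Real.exp (t * (g z - ∑ z', P z' * g z'))
    ≤ Real.exp (t ^ 2 * R ^ 2 / 2)

open Finset

/-- Donsker–Varadhan inequality on a finite set. -/
lemma dv_aux {𝒴 : Type*} [Fintype 𝒴] (P Q : 𝒴 → ℝ)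
    (hP : IsPMF P) (hQ : IsPMF Q) (hpos : ∀ z, 0 < P z → 0 < Q z) (f : 𝒴 → ℝ) :
    (∑ z, P z * f z) - klDiv P Q ≤ Real.log (∑ z, Q z * Real.exp (f z)) := by
  classical
  set S : Finset 𝒴 := univ.filter (fun z => 0 < P z) with hS
  have hmemS : ∀ z, z ∈ S ↔ 0 < P z := by intro z; simp [hS]
  have hPz0 : ∀ z ∉ S, P z = 0 := by
    intro z hz
    have h1 : ¬ 0 < P z := by simpa [hmemS] using hz
    linarith [hP.1 z]
  have hsumS : ∑ z ∈ S, P z = 1 := by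
    rw [← hP.2]
    exact (Finset.sum_subset (Finset.subset_univ S) (fun z _ hz => hPz0 z hz))
  -- rewrite LHS as a sum over S
  have hLHS : (∑ z, P z * f z) - klDiv P Q
      = ∑ z ∈ S, P z * Real.log (Real.exp (f z) * Q z / P z) := by
    rw [klDiv, ← Finset.sum_sub_distrib]
    rw [← Finset.sum_subset (Finset.subset_univ S)
      (fun z _ hz => by simp [hPz0 z hz])]
    apply Finset.sum_congr rfl
    intro z hz
    have hPz : 0 < P z := (hmemS z).1 hz
    have hQz : 0 < Q z := hpos z hPz
    rw [Real.log_div (by positivity) (ne_of_gt hPz),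
        Real.log_mul (by positivity) (ne_of_gt hQz), Real.log_exp,
        Real.log_div (ne_of_gt hPz) (ne_of_gt hQz)]
    ring
  -- Jensen
  have hx : ∀ z ∈ S, Real.exp (f z) * Q z / P z ∈ Set.Ioi (0:ℝ) := by
    intro z hz
    have hPz : 0 < P z := (hmemS z).1 hz
    have hQz : 0 < Q z := hpos z hPz
    exact Set.mem_Ioi.2 (by positivity)
  have hjensen := (strictConcaveOn_log_Ioi.concaveOn).le_map_sum
    (p := fun z => Real.exp (f z) * Q z / P z)
    (fun z hz => hP.1 z) hsumS hx
  have hsimp : ∑ z ∈ S, P z • (Real.exp (f z) * Q z / P z)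
      = ∑ z ∈ S, Q z * Real.exp (f z) := by
    apply Finset.sum_congr rfl
    intro z hz
    have hPz : 0 < P z := (hmemS z).1 hz
    field_simp
    rw [smul_eq_mul, mul_div_assoc', mul_comm (P z), mul_div_assoc, div_self (ne_of_gt hPz), mul_one, mul_comm]
  rw [hsimp] at hjensen
  have h1 : (∑ z, P z * f z) - klDiv P Q ≤ Real.log (∑ z ∈ S, Q z * Real.exp (f z)) := by
    rw [hLHS]
    calc ∑ z ∈ S, P z * Real.log (Real.exp (f z) * Q z / P z)
        = ∑ z ∈ S, P z • Real.log (Real.exp (f z) * Q z / P z) := by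
          simp [smul_eq_mul]
      _ ≤ _ := hjensen
  -- S nonempty, positivity, extend sum to univ
  have hSne : S.Nonempty := by
    by_contra h
    rw [Finset.not_nonempty_iff_eq_empty] at h
    rw [h] at hsumS
    simp at hsumS
  have hposS : 0 < ∑ z ∈ S, Q z * Real.exp (f z) := by
    apply Finset.sum_pos
    · intro z hz
      have hPz : 0 < P z := (hmemS z).1 hz
      have hQz : 0 < Q z := hpos z hPz
      positivity
    · exact hSne
  have hle : ∑ z ∈ S, Q z * Real.exp (f z) ≤ ∑ z, Q z * Real.exp (f z) := by
    apply Finset.sum_le_sum_of_subset_of_nonneg (Finset.subset_univ S)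
    intro z _ _
    have := hQ.1 z
    positivity
  exact h1.trans (Real.log_le_log hposS hle)

/-- Gibbs: nonnegativity of KL. -/
lemma klDiv_nonneg_aux {𝒴 : Type*} [Fintype 𝒴] (P Q : 𝒴 → ℝ)
    (hP : IsPMF P) (hQ : IsPMF Q) (hpos : ∀ z, 0 < P z → 0 < Q z) :
    0 ≤ klDiv P Q := by
  have h := dv_aux P Q hP hQ hpos (fun _ => 0)
  simp [hQ.2] at h
  linarith

lemma opt_t (A B C : ℝ) (hB : 0 ≤ B) (hC : 0 ≤ C)
    (h : ∀ t : ℝ, 0 < t → A ≤ B / t + t * C / 2) :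
    A ≤ Real.sqrt (C * B) * Real.sqrt 2 := by
  rcases eq_or_lt_of_le hB with hB0 | hBpos
  · -- B = 0
    have hA : A ≤ 0 := by
      by_contra hA
      push_neg at hA
      rcases eq_or_lt_of_le hC with hC0 | hCpos
      · have := h 1 one_pos; rw [← hB0, ← hC0] at this; simp at this; linarith
      · have := h (A / C) (by positivity)
        rw [← hB0] at this
        have : A ≤ A / 2 := by
          have hCne : C ≠ 0 := ne_of_gt hCpos
          field_simp at this ⊢
          nlinarith
        linarith
    exact hA.trans (by positivity)
  · rcases eq_or_lt_of_le hC with hC0 | hCpos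
    · -- C = 0
      have hA : A ≤ 0 := by
        by_contra hA
        push_neg at hA
        have := h (2 * B / A) (by positivity)
        rw [← hC0] at this
        have : A ≤ A / 2 := by
          have : B / (2 * B / A) = A / 2 := by field_simp
          linarith [h (2 * B / A) (by positivity), this]
        linarith
      exact hA.trans (by positivity)
    · -- both positive: t = sqrt (2B/C)
      set t := Real.sqrt (2 * B / C) with ht
      have htpos : 0 < t := Real.sqrt_pos.2 (by positivity)
      have ht2 : t ^ 2 = 2 * B / C := Real.sq_sqrt (by positivity)
      have key := h t htpos
      have hCt : C * t ^ 2 = 2 * B := by rw [ht2]; field_simp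
      have hsumval : B / t + t * C / 2 = C * t := by
        field_simp
        nlinarith [hCt]
      have hval : Real.sqrt (C * B) * Real.sqrt 2 = C * t := by
        rw [← Real.sqrt_mul (by positivity)]
        rw [show C * B * 2 = (C * t) ^ 2 by nlinarith [hCt]]
        exact Real.sqrt_sq (by positivity)
      rw [hval]
      linarith [hsumval ▸ key]

/-- Generalization bound via distributional divergence (Theorem 1):
the expected generalization error is bounded by
`√((2R²/N) [(1-α) D_KL(P_ID‖P_train) + α D_KL(P_OOD‖P_train)])`. -/
theorem generalization_bound {𝒴 : Type*} [Fintype 𝒴]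
    (P_ID P_OOD P_train : 𝒴 → ℝ)
    (hID : IsPMF P_ID) (hOOD : IsPMF P_OOD) (htrain : IsPMF P_train)
    (hdisj : ∀ z, P_ID z = 0 ∨ P_OOD z = 0)
    (α : ℝ) (hα0 : 0 ≤ α) (hα1 : α ≤ 1)
    (hposID : ∀ z, 0 < P_ID z → 0 < P_train z)
    (hposOOD : ∀ z, 0 < P_OOD z → 0 < P_train z)
    (N : ℕ) (hN : 0 < N) (g : 𝒴 → ℝ) (R : ℝ)
    (hsub : IsSubGaussianPMF P_train g (R / Real.sqrt N)) :
    (∑ z, ((1 - α) * P_ID z + α * P_OOD z) * g z) - (∑ z, P_train z * g z)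
      ≤ Real.sqrt ((2 * R ^ 2 / N) *
          ((1 - α) * klDiv P_ID P_train + α * klDiv P_OOD P_train)) := by
  classical
  set Pt : 𝒴 → ℝ := fun z => (1 - α) * P_ID z + α * P_OOD z with hPt
  have hPtPMF : IsPMF Pt := by
    constructor
    · intro z
      have := hID.1 z; have := hOOD.1 z
      have h1 : 0 ≤ 1 - α := by linarith
      positivity
    · simp only [hPt, Finset.sum_add_distrib, ← Finset.mul_sum, hID.2, hOOD.2]
      ring
  have hPtpos : ∀ z, 0 < Pt z → 0 < P_train z := by
    intro z hz
    rcases (lt_or_ge 0 (P_ID z)) with h | h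
    · exact hposID z h
    · have hid : P_ID z = 0 := le_antisymm (by linarith [hID.1 z]) (hID.1 z)
      have : 0 < α * P_OOD z := by
        simp only [hPt, hid, mul_zero, zero_add] at hz
        simpa using hz
      have hood : 0 < P_OOD z := by
        rcases (lt_or_ge 0 (P_OOD z)) with h2 | h2
        · exact h2
        · nlinarith
      exact hposOOD z hood
  -- KL of mixture ≤ mixture of KLs
  have hKLmix : klDiv Pt P_train ≤ (1 - α) * klDiv P_ID P_train + α * klDiv P_OOD P_train := by
    rw [klDiv, klDiv, klDiv, Finset.mul_sum, Finset.mul_sum, ← Finset.sum_add_distrib]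
    apply Finset.sum_le_sum
    intro z _
    rcases hdisj z with hid | hood
    · -- P_ID z = 0, Pt z = α * P_OOD z
      simp only [hPt, hid, mul_zero, zero_add, zero_mul, Real.log_zero]
      rcases eq_or_lt_of_le (hOOD.1 z) with h0 | hpos
      · simp [← h0]
      · rcases eq_or_lt_of_le hα0 with ha0 | hapos
        · simp [← ha0]
        · have hQ : 0 < P_train z := hposOOD z hpos
          have : Real.log (α * P_OOD z / P_train z)
              = Real.log α + Real.log (P_OOD z / P_train z) := by
            rw [mul_div_assoc, Real.log_mul (ne_of_gt hapos) (by positivity)]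
          rw [this]
          have hlogα : Real.log α ≤ 0 := Real.log_nonpos (le_of_lt hapos) hα1
          have hzmul : 0 < α * P_OOD z := by positivity
          nlinarith [mul_nonneg (le_of_lt hzmul) (neg_nonneg.2 hlogα)]
    · simp only [hPt, hood, mul_zero, add_zero, zero_mul, Real.log_zero]
      rcases eq_or_lt_of_le (hID.1 z) with h0 | hpos
      · simp [← h0]
      · rcases eq_or_lt_of_le (sub_nonneg.2 hα1) with ha0 | hapos
        · simp [← ha0]
        · have hQ : 0 < P_train z := hposID z hpos
          have : Real.log ((1 - α) * P_ID z / P_train z)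
              = Real.log (1 - α) + Real.log (P_ID z / P_train z) := by
            rw [mul_div_assoc, Real.log_mul (ne_of_gt hapos) (by positivity)]
          rw [this]
          have hlogα : Real.log (1 - α) ≤ 0 := Real.log_nonpos (le_of_lt hapos) (by linarith)
          have hzmul : 0 < (1 - α) * P_ID z := by positivity
          nlinarith [mul_nonneg (le_of_lt hzmul) (neg_nonneg.2 hlogα)]
  set μ : ℝ := ∑ z, P_train z * g z with hμ
  set A : ℝ := (∑ z, Pt z * g z) - μ with hA
  set B : ℝ := (1 - α) * klDiv P_ID P_train + α * klDiv P_OOD P_train with hB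
  set C : ℝ := R ^ 2 / N with hC
  have hCnn : 0 ≤ C := by positivity
  have hBnn : 0 ≤ B := by
    have h1 := klDiv_nonneg_aux P_ID P_train hID htrain hposID
    have h2 := klDiv_nonneg_aux P_OOD P_train hOOD htrain hposOOD
    have : 0 ≤ 1 - α := by linarith
    positivity
  have hRN : (R / Real.sqrt N) ^ 2 = C := by
    rw [div_pow, Real.sq_sqrt (by positivity : (0:ℝ) ≤ (N:ℝ))]
  have key : ∀ t : ℝ, 0 < t → A ≤ B / t + t * C / 2 := by
    intro t ht
    have hdv := dv_aux Pt P_train hPtPMF htrain hPtpos (fun z => t * (g z - μ))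
    have hmgf := hsub t
    rw [hRN] at hmgf
    have hposmgf : 0 < ∑ z, P_train z * Real.exp (t * (g z - μ)) := by
      have hlt : ∑ z : 𝒴, (0:ℝ) < ∑ z, P_train z := by
        rw [htrain.2]; simp
      obtain ⟨z, _, hz⟩ := Finset.exists_lt_of_sum_lt hlt
      apply Finset.sum_pos'
      · intro i _
        exact mul_nonneg (htrain.1 i) (Real.exp_pos _).le
      · exact ⟨z, Finset.mem_univ z, mul_pos hz (Real.exp_pos _)⟩
    have hlog : Real.log (∑ z, P_train z * Real.exp (t * (g z - μ)))
        ≤ t ^ 2 * C / 2 := (Real.log_le_iff_le_exp hposmgf).2 hmgf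
    have hsumf : ∑ z, Pt z * (t * (g z - μ)) = t * A := by
      have h1 : ∀ z, Pt z * (t * (g z - μ)) = t * (Pt z * g z) - t * μ * Pt z := by
        intro z; ring
      simp_rw [h1]
      rw [Finset.sum_sub_distrib, ← Finset.mul_sum, ← Finset.mul_sum, hPtPMF.2]
      simp [hA]
      ring
    rw [hsumf] at hdv
    have hkl : t * A ≤ B + t ^ 2 * C / 2 := by
      have := hdv.trans hlog
      linarith [hKLmix]
    have hmul : A * t ≤ (B / t + t * C / 2) * t := by
      have hexp : (B / t + t * C / 2) * t = B + t ^ 2 * C / 2 := by field_simp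
      rw [hexp]; linarith [hkl]
    exact le_of_mul_le_mul_right hmul ht
  have hopt := opt_t A B C hBnn hCnn key
  have hfinal : Real.sqrt (C * B) * Real.sqrt 2 = Real.sqrt ((2 * R ^ 2 / N) * B) := by
    rw [← Real.sqrt_mul (by positivity)]
    congr 1
    rw [hC]; ring
  rw [hfinal] at hopt
  exact hopt
end

section
/- Let 𝒴 be a finite set, let P_ID and P_OOD be probability mass functions on 𝒴 with disjoint supports, let α ∈ [0,1], and let P_test = (1−α)·P_ID + α·P_OOD. Let P_train be a probability mass function on 𝒴 that is strictly positive on the supports of P_ID and P_OOD, and assume D_KL(P_ID‖P_train) = 0. Let N be a positive integer and let g : 𝒴 → ℝ be a function that is (R/√N)-subGaussian under P_train. Then the expected generalization error satisfies E_{P_test}[g] − E_{P_train}[g] ≤ √( (2R²·α/N) · D_KL(P_OOD‖P_train) ). -/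
lemma dv_linear {𝒴 : Type*} [Fintype 𝒴] (P Q : 𝒴 → ℝ) (hP : IsPMF P) (hQ : IsPMF Q)
    (hpos : ∀ z, 0 < P z → 0 < Q z) (g : 𝒴 → ℝ) (c : ℝ)
    (hsub : ∀ t : ℝ, ∑ z, Q z * Real.exp (t * (g z - ∑ z', Q z' * g z'))
      ≤ Real.exp (t ^ 2 * c / 2)) (t : ℝ) :
    t * ((∑ z, P z * g z) - ∑ z, Q z * g z) ≤ klDiv P Q + t ^ 2 * c / 2 := by
  classical
  set μ := ∑ z', Q z' * g z' with hμ
  set b : 𝒴 → ℝ := fun z => Q z * Real.exp (t * (g z - μ)) with hb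
  set S : Finset 𝒴 := Finset.univ.filter (fun z => 0 < P z) with hS
  have hPz : ∀ z, z ∉ S → P z = 0 := by
    intro z hz
    simp only [hS, Finset.mem_filter, Finset.mem_univ, true_and] at hz
    exact le_antisymm (not_lt.1 hz) (hP.1 z)
  have hSne : S.Nonempty := by
    by_contra h
    have : ∑ z, P z = 0 := by
      apply Finset.sum_eq_zero
      intro z _
      exact hPz z (fun hz => h ⟨z, hz⟩)
    rw [hP.2] at this; norm_num at this
  have hbpos : ∀ z ∈ S, 0 < b z := by
    intro z hz
    simp only [hS, Finset.mem_filter, Finset.mem_univ, true_and] at hz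
    exact mul_pos (hpos z hz) (Real.exp_pos _)
  -- sum of P over S is 1
  have hsumS : ∑ z ∈ S, P z = 1 := by
    rw [← hP.2]
    exact Finset.sum_subset (Finset.subset_univ S) (fun z _ hz => hPz z hz)
  -- Jensen
  have hJ : ∑ z ∈ S, P z * Real.log (b z / P z)
      ≤ Real.log (∑ z ∈ S, P z * (b z / P z)) := by
    have := (strictConcaveOn_log_Ioi.concaveOn).le_map_sum
      (t := S) (w := fun z => P z) (p := fun z => b z / P z)
      (fun z hz => hP.1 z) hsumS
      (fun z hz => by
        have hPzpos : 0 < P z := by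
          simpa [hS, Finset.mem_filter] using hz
        exact Set.mem_Ioi.2 (div_pos (hbpos z hz) hPzpos))
    simpa [smul_eq_mul] using this
  have hcancel : ∑ z ∈ S, P z * (b z / P z) = ∑ z ∈ S, b z := by
    apply Finset.sum_congr rfl
    intro z hz
    have hPzpos : 0 < P z := by simpa [hS, Finset.mem_filter] using hz
    field_simp
  have hbsum_pos : 0 < ∑ z ∈ S, b z := Finset.sum_pos hbpos hSne
  have hbsum_le : ∑ z ∈ S, b z ≤ Real.exp (t ^ 2 * c / 2) := by
    refine le_trans ?_ (hsub t)
    apply Finset.sum_le_sum_of_subset_of_nonneg (Finset.subset_univ S)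
    intro z _ _
    exact mul_nonneg (hQ.1 z) (Real.exp_pos _).le
  have hlog : Real.log (∑ z ∈ S, b z) ≤ t ^ 2 * c / 2 := by
    calc Real.log (∑ z ∈ S, b z) ≤ Real.log (Real.exp (t ^ 2 * c / 2)) :=
          Real.log_le_log hbsum_pos hbsum_le
      _ = t ^ 2 * c / 2 := Real.log_exp _
  -- identify the LHS sum
  have hid : ∑ z ∈ S, P z * Real.log (b z / P z)
      = t * ((∑ z, P z * g z) - μ) - klDiv P Q := by
    have h1 : ∀ z ∈ S, P z * Real.log (b z / P z)
        = P z * (t * (g z - μ)) - P z * Real.log (P z / Q z) := by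
      intro z hz
      have hPzpos : 0 < P z := by simpa [hS, Finset.mem_filter] using hz
      have hQzpos : 0 < Q z := hpos z hPzpos
      have : Real.log (b z / P z) = t * (g z - μ) - Real.log (P z / Q z) := by
        rw [hb]
        rw [Real.log_div (by positivity) hPzpos.ne',
            Real.log_mul hQzpos.ne' (Real.exp_pos _).ne', Real.log_exp,
            Real.log_div hPzpos.ne' hQzpos.ne']
        ring
      rw [this]; ring
    rw [Finset.sum_congr rfl h1, Finset.sum_sub_distrib]
    have h2 : ∑ z ∈ S, P z * (t * (g z - μ)) = t * ((∑ z, P z * g z) - μ) := by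
      have e1 : ∑ z ∈ S, P z * (t * (g z - μ))
          = ∑ z ∈ S, (t * (P z * g z) - (t * μ) * P z) := by
        apply Finset.sum_congr rfl; intro z _; ring
      rw [e1, Finset.sum_sub_distrib, ← Finset.mul_sum, ← Finset.mul_sum, hsumS]
      have e2 : ∑ z ∈ S, P z * g z = ∑ z, P z * g z :=
        Finset.sum_subset (Finset.subset_univ S) (fun z _ hz => by rw [hPz z hz]; ring)
      rw [e2]; ring
    have h3 : ∑ z ∈ S, P z * Real.log (P z / Q z) = klDiv P Q := by
      unfold klDiv
      exact Finset.sum_subset (Finset.subset_univ S) (fun z _ hz => by rw [hPz z hz]; ring)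
    rw [h2, h3]
  have hfinal : ∑ z ∈ S, P z * Real.log (b z / P z) ≤ t ^ 2 * c / 2 := by
    refine hJ.trans ?_
    rw [hcancel]
    exact hlog
  rw [hid] at hfinal
  linarith

lemma dv_sqrt {𝒴 : Type*} [Fintype 𝒴] (P Q : 𝒴 → ℝ) (hP : IsPMF P) (hQ : IsPMF Q)
    (hpos : ∀ z, 0 < P z → 0 < Q z) (g : 𝒴 → ℝ) (c : ℝ) (hc : 0 ≤ c)
    (hsub : ∀ t : ℝ, ∑ z, Q z * Real.exp (t * (g z - ∑ z', Q z' * g z'))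
      ≤ Real.exp (t ^ 2 * c / 2)) :
    (∑ z, P z * g z) - (∑ z, Q z * g z) ≤ Real.sqrt (2 * c * klDiv P Q) := by
  set Δ := (∑ z, P z * g z) - (∑ z, Q z * g z) with hΔ
  have hK : 0 ≤ klDiv P Q := by
    have := dv_linear P Q hP hQ hpos g c hsub 0
    simpa using this
  rcases le_or_gt Δ 0 with h | h
  · exact h.trans (Real.sqrt_nonneg _)
  · rcases eq_or_lt_of_le hc with hc0 | hc0
    · exfalso
      have := dv_linear P Q hP hQ hpos g c hsub ((klDiv P Q + 1) / Δ)
      rw [← hc0] at this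
      have h2 : (klDiv P Q + 1) / Δ * Δ = klDiv P Q + 1 := div_mul_cancel₀ _ h.ne'
      nlinarith
    · have key := dv_linear P Q hP hQ hpos g c hsub (Δ / c)
      have hu : Δ / c * c = Δ := div_mul_cancel₀ _ hc0.ne'
      have hΔ2 : Δ ^ 2 ≤ 2 * c * klDiv P Q := by
        nlinarith [key, hu, sq_nonneg (Δ / c), hc0]
      have h2cK : 0 ≤ 2 * c * klDiv P Q := by positivity
      exact (Real.le_sqrt h.le h2cK).2 hΔ2

/-- Corollary 1: when the ID patterns are perfectly learned
(`D_KL(P_ID‖P_train) = 0`), the expected generalization error is dominated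
by the OOD component: `error ≤ √((2R²α/N) D_KL(P_OOD‖P_train))`. -/
theorem generalization_bound_ood {𝒴 : Type*} [Fintype 𝒴]
    (P_ID P_OOD P_train : 𝒴 → ℝ)
    (hID : IsPMF P_ID) (hOOD : IsPMF P_OOD) (htrain : IsPMF P_train)
    (hdisj : ∀ z, P_ID z = 0 ∨ P_OOD z = 0)
    (α : ℝ) (hα0 : 0 ≤ α) (hα1 : α ≤ 1)
    (hposID : ∀ z, 0 < P_ID z → 0 < P_train z)
    (hposOOD : ∀ z, 0 < P_OOD z → 0 < P_train z)
    (hKL0 : klDiv P_ID P_train = 0)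
    (N : ℕ) (hN : 0 < N) (g : 𝒴 → ℝ) (R : ℝ)
    (hsub : IsSubGaussianPMF P_train g (R / Real.sqrt N)) :
    (∑ z, ((1 - α) * P_ID z + α * P_OOD z) * g z) - (∑ z, P_train z * g z)
      ≤ Real.sqrt ((2 * R ^ 2 * α / N) * klDiv P_OOD P_train) := by
  set c : ℝ := (R / Real.sqrt N) ^ 2 with hc
  have hcval : c = R ^ 2 / N := by
    rw [hc, div_pow, Real.sq_sqrt (Nat.cast_nonneg N)]
  have hcnn : 0 ≤ c := sq_nonneg _
  have hID_bd := dv_sqrt P_ID P_train hID htrain hposID g c hcnn hsub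
  have hOOD_bd := dv_sqrt P_OOD P_train hOOD htrain hposOOD g c hcnn hsub
  have hKnn : 0 ≤ klDiv P_OOD P_train := by
    have := dv_linear P_OOD P_train hOOD htrain hposOOD g c hsub 0
    simpa using this
  rw [hKL0] at hID_bd
  simp only [mul_zero, Real.sqrt_zero] at hID_bd
  have hsplit : (∑ z, ((1 - α) * P_ID z + α * P_OOD z) * g z)
      = (1 - α) * (∑ z, P_ID z * g z) + α * (∑ z, P_OOD z * g z) := by
    rw [Finset.mul_sum, Finset.mul_sum, ← Finset.sum_add_distrib]
    apply Finset.sum_congr rfl; intro z _; ring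
  have hQsum : (∑ z, P_train z * g z)
      = (1 - α) * (∑ z, P_train z * g z) + α * (∑ z, P_train z * g z) := by ring
  have step1 : (∑ z, ((1 - α) * P_ID z + α * P_OOD z) * g z) - (∑ z, P_train z * g z)
      ≤ α * Real.sqrt (2 * c * klDiv P_OOD P_train) := by
    rw [hsplit]
    have h1 : (1 - α) * ((∑ z, P_ID z * g z) - ∑ z, P_train z * g z) ≤ 0 :=
      mul_nonpos_of_nonneg_of_nonpos (by linarith) hID_bd
    have h2 : α * ((∑ z, P_OOD z * g z) - ∑ z, P_train z * g z)
        ≤ α * Real.sqrt (2 * c * klDiv P_OOD P_train) :=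
      mul_le_mul_of_nonneg_left hOOD_bd hα0
    nlinarith
  refine step1.trans ?_
  have : α * Real.sqrt (2 * c * klDiv P_OOD P_train)
      = Real.sqrt (α ^ 2 * (2 * c * klDiv P_OOD P_train)) := by
    rw [Real.sqrt_mul (sq_nonneg α), Real.sqrt_sq hα0]
  rw [this]
  apply Real.sqrt_le_sqrt
  rw [hcval]
  have hX : 0 ≤ 2 * (R ^ 2 / N) * klDiv P_OOD P_train := by positivity
  have hαsq : α ^ 2 ≤ α := by nlinarith
  calc α ^ 2 * (2 * (R ^ 2 / ↑N) * klDiv P_OOD P_train)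
      ≤ α * (2 * (R ^ 2 / ↑N) * klDiv P_OOD P_train) :=
        mul_le_mul_of_nonneg_right hαsq hX
    _ = 2 * R ^ 2 * α / ↑N * klDiv P_OOD P_train := by ring
end

section
/- Let 𝒞 and 𝒴 be finite sets. Let π_OOD and π_train be probability mass functions on 𝒞, and for each c ∈ 𝒞 let A_OOD(·|c) and A_train(·|c) be probability mass functions on 𝒴, with all quantities whose logarithms appear strictly positive wherever the corresponding numerator is positive. Define P_OOD(y) = Σ_c A_OOD(y|c)·π_OOD(c) and P_train(y) = Σ_c A_train(y|c)·π_train(c). Let P_ID be a probability mass function on 𝒴 with support disjoint from that of P_OOD and with D_KL(P_ID‖P_train) = 0, let α ∈ [0,1], and let P_test = (1−α)·P_ID + α·P_OOD. Let N be a positive integer and let g : 𝒴 → ℝ be (R/√N)-subGaussian under P_train. Then the expected generalization error satisfies (E_{P_test}[g] − E_{P_train}[g])² ≤ (2R²·α/N) · [ D_KL(π_OOD‖π_train) + Σ_c π_OOD(c)·D_KL(A_OOD(·|c)‖A_train(·|c)) ]. -/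
/-- log-sum inequality. -/
lemma logSum {ι : Type*} [Fintype ι] (a b : ι → ℝ) (ha : ∀ i, 0 ≤ a i)
    (hb : ∀ i, 0 ≤ b i) (hab : ∀ i, 0 < a i → 0 < b i) :
    (∑ i, a i) * Real.log ((∑ i, a i) / (∑ i, b i)) ≤ ∑ i, a i * Real.log (a i / b i) := by
  rcases (Finset.sum_nonneg fun i _ => ha i).eq_or_lt with h0 | hApos
  · have hz : ∀ i ∈ Finset.univ, a i = 0 :=
      (Finset.sum_eq_zero_iff_of_nonneg (fun i _ => ha i)).mp h0.symm
    rw [← h0]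
    simp only [zero_mul]
    exact le_of_eq (Finset.sum_eq_zero fun i hi => by rw [hz i hi, zero_mul]).symm
  · set A := ∑ i, a i with hA
    set B := ∑ i, b i with hB
    obtain ⟨i0, _, hi0⟩ := Finset.exists_ne_zero_of_sum_ne_zero (ne_of_gt hApos)
    have hb0 : 0 < b i0 := hab i0 (lt_of_le_of_ne (ha i0) (Ne.symm hi0))
    have hBpos : 0 < B := lt_of_lt_of_le hb0
      (Finset.single_le_sum (fun i _ => hb i) (Finset.mem_univ i0))
    have key : ∀ i, a i * (Real.log (A / B) - Real.log (a i / b i)) ≤ A * b i / B - a i := by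
      intro i
      rcases (ha i).eq_or_lt with h0 | hai
      · rw [← h0]; simp; exact div_nonneg (mul_nonneg hApos.le (hb i)) hBpos.le
      · have hbi := hab i hai
        have hu : 0 < A * b i / (B * a i) := by positivity
        have hlog := Real.log_le_sub_one_of_pos hu
        have heq : Real.log (A * b i / (B * a i)) = Real.log (A / B) - Real.log (a i / b i) := by
          rw [Real.log_div (by positivity) (by positivity),
            Real.log_mul (ne_of_gt hApos) (ne_of_gt hbi),
            Real.log_mul (ne_of_gt hBpos) (ne_of_gt hai),
            Real.log_div (ne_of_gt hApos) (ne_of_gt hBpos),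
            Real.log_div (ne_of_gt hai) (ne_of_gt hbi)]
          ring
        rw [heq] at hlog
        have h2 := mul_le_mul_of_nonneg_left hlog hai.le
        have h3 : a i * (A * b i / (B * a i) - 1) = A * b i / B - a i := by
          field_simp
        linarith
    have hsum : ∑ i, (a i * (Real.log (A / B) - Real.log (a i / b i))) ≤ ∑ i, (A * b i / B - a i) := Finset.sum_le_sum (fun i _ => key i)
    have e1 : ∑ i, (a i * (Real.log (A / B) - Real.log (a i / b i)))
        = A * Real.log (A / B) - ∑ i, a i * Real.log (a i / b i) := by
      simp_rw [mul_sub]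
      rw [Finset.sum_sub_distrib, ← Finset.sum_mul]
    have e2 : ∑ i, (A * b i / B - a i) = 0 := by
      rw [Finset.sum_sub_distrib]
      have : ∑ i, A * b i / B = A := by
        rw [← Finset.sum_div, ← Finset.mul_sum]
        field_simp
        exact hB.symm
      rw [this]
      rw [← hA, sub_self]
    rw [e1, e2] at hsum
    linarith




lemma expS_pos {𝒴 : Type*} [Fintype 𝒴] (P Q : 𝒴 → ℝ) (hP : ∀ z, 0 ≤ P z)
    (hQ1 : ∑ z, Q z = 1) (hQ0 : ∀ z, 0 ≤ Q z)
    (habs : ∀ z, 0 < Q z → 0 < P z) (f : 𝒴 → ℝ) :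
    0 < ∑ z, P z * Real.exp (f z) := by
  obtain ⟨z0, _, hz0⟩ := Finset.exists_ne_zero_of_sum_ne_zero
    (by rw [hQ1]; norm_num : ∑ z, Q z ≠ 0)
  have hq0 : 0 < Q z0 := lt_of_le_of_ne (hQ0 z0) (Ne.symm hz0)
  have hp0 := habs z0 hq0
  exact Finset.sum_pos' (fun z _ => mul_nonneg (hP z) (Real.exp_pos _).le)
    ⟨z0, Finset.mem_univ _, by positivity⟩

/-- Gibbs / Donsker–Varadhan inequality. -/
lemma gibbs {𝒴 : Type*} [Fintype 𝒴] (P Q : 𝒴 → ℝ) (hP : IsPMF P) (hQ : IsPMF Q)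
    (habs : ∀ z, 0 < Q z → 0 < P z) (f : 𝒴 → ℝ) :
    ∑ z, Q z * f z ≤ klDiv Q P + Real.log (∑ z, P z * Real.exp (f z)) := by
  set S := ∑ z, P z * Real.exp (f z) with hS
  have hSpos : 0 < S := expS_pos P Q hP.1 hQ.2 hQ.1 habs f
  have key : ∀ z, Q z * f z - Q z * Real.log (Q z / P z) - Q z * Real.log S
      ≤ P z * Real.exp (f z) / S - Q z := by
    intro z
    rcases (hQ.1 z).eq_or_lt with h0 | hq
    · rw [← h0]; simp
      exact div_nonneg (mul_nonneg (hP.1 z) (Real.exp_pos _).le) hSpos.le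
    · have hp := habs z hq
      have hu : 0 < P z * Real.exp (f z) / (Q z * S) := by positivity
      have hlog := Real.log_le_sub_one_of_pos hu
      have heq : Real.log (P z * Real.exp (f z) / (Q z * S))
          = f z - Real.log (Q z / P z) - Real.log S := by
        rw [Real.log_div (by positivity) (by positivity),
          Real.log_mul (ne_of_gt hp) (Real.exp_ne_zero _),
          Real.log_mul (ne_of_gt hq) (ne_of_gt hSpos), Real.log_exp,
          Real.log_div (ne_of_gt hq) (ne_of_gt hp)]
        ring
      rw [heq] at hlog
      have h2 := mul_le_mul_of_nonneg_left hlog hq.le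
      have h3 : Q z * (P z * Real.exp (f z) / (Q z * S) - 1)
          = P z * Real.exp (f z) / S - Q z := by field_simp
      nlinarith
  have hsum : ∑ z, (Q z * f z - Q z * Real.log (Q z / P z) - Q z * Real.log S)
      ≤ ∑ z, (P z * Real.exp (f z) / S - Q z) := Finset.sum_le_sum (fun z _ => key z)
  have e1 : ∑ z, (Q z * f z - Q z * Real.log (Q z / P z) - Q z * Real.log S)
      = (∑ z, Q z * f z) - klDiv Q P - Real.log S := by
    rw [Finset.sum_sub_distrib, Finset.sum_sub_distrib, ← Finset.sum_mul, hQ.2, one_mul]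
    rfl
  have e2 : ∑ z, (P z * Real.exp (f z) / S - Q z) = 0 := by
    rw [Finset.sum_sub_distrib, ← Finset.sum_div, hQ.2, ← hS]
    field_simp
    simp
  rw [e1, e2] at hsum
  linarith

lemma klDiv_nonneg {𝒴 : Type*} [Fintype 𝒴] (P Q : 𝒴 → ℝ) (hP : IsPMF P) (hQ : IsPMF Q)
    (habs : ∀ z, 0 < Q z → 0 < P z) : 0 ≤ klDiv Q P := by
  have := gibbs P Q hP hQ habs (fun _ => 0)
  simp [hP.2] at this
  linarith

/-- subGaussian change-of-measure bound. -/
lemma sq_bound {𝒴 : Type*} [Fintype 𝒴] (P Q : 𝒴 → ℝ) (hP : IsPMF P) (hQ : IsPMF Q)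
    (habs : ∀ z, 0 < Q z → 0 < P z) (g : 𝒴 → ℝ) (r : ℝ)
    (hsub : IsSubGaussianPMF P g r) :
    ((∑ z, Q z * g z) - ∑ z, P z * g z) ^ 2 ≤ 2 * r ^ 2 * klDiv Q P := by
  set μ := ∑ z, P z * g z with hμ
  set Δ := (∑ z, Q z * g z) - μ with hΔ
  set K := klDiv Q P with hK
  have hK0 : 0 ≤ K := klDiv_nonneg P Q hP hQ habs
  have hmain : ∀ t : ℝ, t * Δ ≤ K + t ^ 2 * r ^ 2 / 2 := by
    intro t
    have hg := gibbs P Q hP hQ habs (fun z => t * (g z - μ))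
    have h1 : ∑ z, Q z * (t * (g z - μ)) = t * Δ := by
      have : ∀ z, Q z * (t * (g z - μ)) = t * (Q z * g z) - (t * μ) * Q z := by
        intro z; ring
      simp_rw [this]
      rw [Finset.sum_sub_distrib, ← Finset.mul_sum, ← Finset.mul_sum, hQ.2, hΔ]
      ring
    have hSpos := expS_pos P Q hP.1 hQ.2 hQ.1 habs (fun z => t * (g z - μ))
    have hlog : Real.log (∑ z, P z * Real.exp (t * (g z - μ)))
        ≤ t ^ 2 * r ^ 2 / 2 := by
      calc Real.log (∑ z, P z * Real.exp (t * (g z - μ)))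
          ≤ Real.log (Real.exp (t ^ 2 * r ^ 2 / 2)) := by
            apply Real.log_le_log hSpos
            exact hsub t
        _ = t ^ 2 * r ^ 2 / 2 := Real.log_exp _
    rw [h1, ← hK] at hg
    exact hg.trans (add_le_add_right hlog K)
  by_cases hr : r = 0
  · subst hr
    have hΔ0 : Δ = 0 := by
      by_contra hne
      have h := hmain ((K + 1) / Δ)
      rw [div_mul_cancel₀ _ hne] at h
      simp at h
      linarith
    rw [hΔ0]
    simp
  · have hr2 : 0 < r ^ 2 := by positivity
    have h := hmain (Δ / r ^ 2)
    have e1 : Δ / r ^ 2 * Δ = Δ ^ 2 / r ^ 2 := by ring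
    have e2 : (Δ / r ^ 2) ^ 2 * r ^ 2 / 2 = Δ ^ 2 / (2 * r ^ 2) := by
      field_simp
    rw [e1, e2] at h
    have h4 : Δ ^ 2 / (2 * r ^ 2) ≤ K := by
      have e3 : Δ ^ 2 / r ^ 2 - Δ ^ 2 / (2 * r ^ 2) = Δ ^ 2 / (2 * r ^ 2) := by
        field_simp; ring
      linarith
    have h5 := (div_le_iff₀ (by positivity : (0:ℝ) < 2 * r ^ 2)).mp h4
    linarith



lemma scale_term (β p q : ℝ) (hβ0 : 0 ≤ β) (hβ1 : β ≤ 1) (hp : 0 ≤ p)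
    (hq : 0 < p → 0 < q) :
    β * p * Real.log (β * p / q) ≤ β * (p * Real.log (p / q)) := by
  rcases hβ0.eq_or_lt with h | hβ
  · rw [← h]; simp
  rcases hp.eq_or_lt with h | hp'
  · rw [← h]; simp
  have hqq := hq hp'
  have heq : Real.log (β * p / q) = Real.log β + Real.log (p / q) := by
    rw [Real.log_div (by positivity) (ne_of_gt hqq),
      Real.log_mul (ne_of_gt hβ) (ne_of_gt hp'),
      Real.log_div (ne_of_gt hp') (ne_of_gt hqq)]
    ring
  rw [heq]
  have hlogβ : Real.log β ≤ 0 := Real.log_nonpos hβ0 hβ1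
  nlinarith [mul_nonpos_of_nonneg_of_nonpos
    (by positivity : (0:ℝ) ≤ β * p) hlogβ]

/-- KL of the mixture against T. -/
lemma mix_kl {𝒴 : Type*} [Fintype 𝒴] (I O T : 𝒴 → ℝ) (hI : IsPMF I) (hO : IsPMF O)
    (hdisj : ∀ y, I y = 0 ∨ O y = 0)
    (hposO : ∀ y, 0 < O y → 0 < T y) (hposI : ∀ y, 0 < I y → 0 < T y)
    (hKL0 : klDiv I T = 0) (α : ℝ) (hα0 : 0 ≤ α) (hα1 : α ≤ 1) :
    klDiv (fun y => (1 - α) * I y + α * O y) T ≤ α * klDiv O T := by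
  have key : ∀ y, ((1 - α) * I y + α * O y) * Real.log (((1 - α) * I y + α * O y) / T y)
      ≤ (1 - α) * (I y * Real.log (I y / T y)) + α * (O y * Real.log (O y / T y)) := by
    intro y
    rcases hdisj y with h | h
    · rw [h]
      simp only [mul_zero, zero_add, zero_mul]
      have := scale_term α (O y) (T y) hα0 hα1 (hO.1 y) (hposO y)
      linarith
    · rw [h]
      simp only [mul_zero, add_zero, zero_mul]
      have := scale_term (1 - α) (I y) (T y) (by linarith) (by linarith) (hI.1 y) (hposI y)
      linarith
  have hsum : klDiv (fun y => (1 - α) * I y + α * O y) T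
      ≤ ∑ y, ((1 - α) * (I y * Real.log (I y / T y)) + α * (O y * Real.log (O y / T y))) :=
    Finset.sum_le_sum (fun y _ => key y)
  have e : ∑ y, ((1 - α) * (I y * Real.log (I y / T y)) + α * (O y * Real.log (O y / T y)))
      = (1 - α) * klDiv I T + α * klDiv O T := by
    rw [Finset.sum_add_distrib, ← Finset.mul_sum, ← Finset.mul_sum]
    rfl
  rw [e, hKL0, mul_zero, zero_add] at hsum
  exact hsum




/-- chain rule upper bound for the output-marginal KL. -/
lemma chain_kl {𝒞 𝒴 : Type*} [Fintype 𝒞] [Fintype 𝒴] (π π' : 𝒞 → ℝ) (A B : 𝒞 → 𝒴 → ℝ)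
    (hπ : IsPMF π) (hπ' : IsPMF π') (hA : ∀ c, IsPMF (A c)) (hB : ∀ c, IsPMF (B c))
    (hposπ : ∀ c, 0 < π c → 0 < π' c)
    (hposA : ∀ c y, 0 < π c → 0 < A c y → 0 < B c y) :
    klDiv (fun y => ∑ c, A c y * π c) (fun y => ∑ c, B c y * π' c)
      ≤ klDiv π π' + ∑ c, π c * klDiv (A c) (B c) := by
  have step1 : klDiv (fun y => ∑ c, A c y * π c) (fun y => ∑ c, B c y * π' c)
      ≤ ∑ y, ∑ c, (A c y * π c) * Real.log ((A c y * π c) / (B c y * π' c)) := by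
    unfold klDiv
    apply Finset.sum_le_sum
    intro y _
    exact logSum (fun c => A c y * π c) (fun c => B c y * π' c)
      (fun c => mul_nonneg ((hA c).1 y) (hπ.1 c))
      (fun c => mul_nonneg ((hB c).1 y) (hπ'.1 c))
      (fun c hc => by
        have hc' : 0 < A c y * π c := hc
        have h1 : 0 < A c y := by
          rcases ((hA c).1 y).eq_or_lt with h | h
          · exfalso; rw [← h, zero_mul] at hc'; exact lt_irrefl 0 hc'
          · exact h
        have h2 : 0 < π c := by
          rcases (hπ.1 c).eq_or_lt with h | h
          · exfalso; rw [← h, mul_zero] at hc'; exact lt_irrefl 0 hc'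
          · exact h
        exact mul_pos (hposA c y h2 h1) (hposπ c h2))
  refine step1.trans (le_of_eq ?_)
  rw [Finset.sum_comm]
  unfold klDiv
  rw [← Finset.sum_add_distrib]
  apply Finset.sum_congr rfl
  intro c _
  rcases (hπ.1 c).eq_or_lt with h0 | hπc
  · rw [← h0]; simp
  · have hπ'c := hposπ c hπc
    have perY : ∀ y, (A c y * π c) * Real.log ((A c y * π c) / (B c y * π' c))
        = (A c y * (π c * Real.log (π c / π' c))) + π c * (A c y * Real.log (A c y / B c y)) := by
      intro y
      rcases ((hA c).1 y).eq_or_lt with hA0 | hApos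
      · rw [← hA0]; simp
      · have hBpos := hposA c y hπc hApos
        rw [Real.log_div (by positivity) (by positivity),
          Real.log_mul (ne_of_gt hApos) (ne_of_gt hπc),
          Real.log_mul (ne_of_gt hBpos) (ne_of_gt hπ'c),
          Real.log_div (ne_of_gt hπc) (ne_of_gt hπ'c),
          Real.log_div (ne_of_gt hApos) (ne_of_gt hBpos)]
        ring
    simp_rw [perY]
    rw [Finset.sum_add_distrib, ← Finset.sum_mul, (hA c).2, one_mul, ← Finset.mul_sum]
/-- Theorem 2 (OOD generalization error for training with CoT): the squared
expected generalization error is bounded by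
`(2R²α/N) [ D_KL(π_OOD‖π_train) + E_{c∼π_OOD}[D_KL(A_OOD(·|c)‖A_train(·|c))] ]`. -/
theorem ood_generalization_bound_cot {𝒞 𝒴 : Type*} [Fintype 𝒞] [Fintype 𝒴]
    (π_OOD π_train : 𝒞 → ℝ) (A_OOD A_train : 𝒞 → 𝒴 → ℝ)
    (hπO : IsPMF π_OOD) (hπT : IsPMF π_train)
    (hAO : ∀ c, IsPMF (A_OOD c)) (hAT : ∀ c, IsPMF (A_train c))
    (hposP : ∀ y, 0 < ∑ c, A_OOD c y * π_OOD c → 0 < ∑ c, A_train c y * π_train c)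
    (hposπ : ∀ c, 0 < π_OOD c → 0 < π_train c)
    (hposA : ∀ c y, 0 < π_OOD c → 0 < A_OOD c y → 0 < A_train c y)
    (P_ID : 𝒴 → ℝ) (hID : IsPMF P_ID)
    (hdisj : ∀ y, P_ID y = 0 ∨ (∑ c, A_OOD c y * π_OOD c) = 0)
    (hposID : ∀ y, 0 < P_ID y → 0 < ∑ c, A_train c y * π_train c)
    (hKL0 : klDiv P_ID (fun y => ∑ c, A_train c y * π_train c) = 0)
    (α : ℝ) (hα0 : 0 ≤ α) (hα1 : α ≤ 1)
    (N : ℕ) (hN : 0 < N) (g : 𝒴 → ℝ) (R : ℝ)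
    (hsub : IsSubGaussianPMF (fun y => ∑ c, A_train c y * π_train c) g
      (R / Real.sqrt N)) :
    ((∑ y, ((1 - α) * P_ID y + α * ∑ c, A_OOD c y * π_OOD c) * g y)
        - ∑ y, (∑ c, A_train c y * π_train c) * g y) ^ 2
      ≤ (2 * R ^ 2 * α / N) *
          (klDiv π_OOD π_train + ∑ c, π_OOD c * klDiv (A_OOD c) (A_train c)) := by
  have hOnn : ∀ y, 0 ≤ ∑ c, A_OOD c y * π_OOD c :=
    fun y => Finset.sum_nonneg fun c _ => mul_nonneg ((hAO c).1 y) (hπO.1 c)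
  have hTnn : ∀ y, 0 ≤ ∑ c, A_train c y * π_train c :=
    fun y => Finset.sum_nonneg fun c _ => mul_nonneg ((hAT c).1 y) (hπT.1 c)
  have hOsum : ∑ y, ∑ c, A_OOD c y * π_OOD c = 1 := by
    rw [Finset.sum_comm]
    have h : ∀ c, ∑ y, A_OOD c y * π_OOD c = π_OOD c := fun c => by
      rw [← Finset.sum_mul, (hAO c).2, one_mul]
    rw [Finset.sum_congr rfl (fun c _ => h c), hπO.2]
  have hTsum : ∑ y, ∑ c, A_train c y * π_train c = 1 := by
    rw [Finset.sum_comm]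
    have h : ∀ c, ∑ y, A_train c y * π_train c = π_train c := fun c => by
      rw [← Finset.sum_mul, (hAT c).2, one_mul]
    rw [Finset.sum_congr rfl (fun c _ => h c), hπT.2]
  have hOpmf : IsPMF (fun y => ∑ c, A_OOD c y * π_OOD c) := ⟨hOnn, hOsum⟩
  have hTpmf : IsPMF (fun y => ∑ c, A_train c y * π_train c) := ⟨hTnn, hTsum⟩
  have hQpmf : IsPMF (fun y => (1 - α) * P_ID y + α * ∑ c, A_OOD c y * π_OOD c) := by
    constructor
    · intro y
      exact add_nonneg (mul_nonneg (by linarith) (hID.1 y)) (mul_nonneg hα0 (hOnn y))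
    · rw [Finset.sum_add_distrib, ← Finset.mul_sum, ← Finset.mul_sum, hID.2, hOsum]
      ring
  have habsQ : ∀ y, 0 < (1 - α) * P_ID y + α * ∑ c, A_OOD c y * π_OOD c →
      0 < ∑ c, A_train c y * π_train c := by
    intro y hy
    rcases (hID.1 y).eq_or_lt with hI | hI
    · rcases (hOnn y).eq_or_lt with hO | hO
      · exfalso; rw [← hI, ← hO] at hy; simp at hy
      · exact hposP y hO
    · exact hposID y hI
  have hmain := sq_bound (fun y => ∑ c, A_train c y * π_train c)
      (fun y => (1 - α) * P_ID y + α * ∑ c, A_OOD c y * π_OOD c)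
      hTpmf hQpmf habsQ g (R / Real.sqrt N) hsub
  have hkl1 := mix_kl P_ID (fun y => ∑ c, A_OOD c y * π_OOD c)
      (fun y => ∑ c, A_train c y * π_train c) hID hOpmf hdisj hposP hposID hKL0 α hα0 hα1
  have hkl2 := chain_kl π_OOD π_train A_OOD A_train hπO hπT hAO hAT hposπ hposA
  have hchain : klDiv (fun y => (1 - α) * P_ID y + α * ∑ c, A_OOD c y * π_OOD c)
      (fun y => ∑ c, A_train c y * π_train c)
      ≤ α * (klDiv π_OOD π_train + ∑ c, π_OOD c * klDiv (A_OOD c) (A_train c)) := by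
    refine le_trans ?_ (mul_le_mul_of_nonneg_left hkl2 hα0)
    exact hkl1
  have hNpos : (0:ℝ) < (N:ℝ) := Nat.cast_pos.mpr hN
  have hcoef : 2 * (R / Real.sqrt N) ^ 2 = 2 * R ^ 2 / (N:ℝ) := by
    rw [div_pow, Real.sq_sqrt (Nat.cast_nonneg N)]
    ring
  refine le_trans hmain ?_
  rw [hcoef]
  calc (2 * R ^ 2 / (N:ℝ)) * klDiv (fun y => (1 - α) * P_ID y + α * ∑ c, A_OOD c y * π_OOD c)
        (fun y => ∑ c, A_train c y * π_train c)
      ≤ (2 * R ^ 2 / (N:ℝ)) *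
        (α * (klDiv π_OOD π_train + ∑ c, π_OOD c * klDiv (A_OOD c) (A_train c))) :=
        mul_le_mul_of_nonneg_left hchain (by positivity)
    _ = (2 * R ^ 2 * α / (N:ℝ)) *
        (klDiv π_OOD π_train + ∑ c, π_OOD c * klDiv (A_OOD c) (A_train c)) := by ring
end
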